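/- Fix (ε1,ε2) ∈ (0,1)² with ε1+ε2 < 1. Let μ := (min_{y : P_Y(y)>0} P_Y(y))^{-1} and θ_n := √((3μ/n)·log(8|Y|/(1−ε1−ε2))). There exists n0 ∈ ℕ (depending only on P_Y, ε1, ε2) such that for all n ≥ n0, all N1, N2 ∈ ℕ and every (n,N1,N2)-code (f1,f2,g1,g2) with β1 ≤ ε1 and η1 ≤ ε2, the set C_n := B_n ∩ D_{Y,n} ∩ (X^n×T_n) satisfies P_XY^n(C_n) ≥ (1−ε1−ε2)/2, where D_{Y,n} := {(x^n,y^n) : g1(f1(x^n),y^n) = H0}, B_n := {(x^n,y^n) : P_{Z|Y}^n(G(f2(f1(x^n),y^n)) | y^n) ≥ (1−ε1−ε2)/(1+3ε2−ε1)} with G(m2) := {z^n : g2(m2,z^n) = H0} and P_{Z|Y}^n(·|y^n) = ∏_i P_{Z|Y}(·|y_i), and T_n := {y^n : |P̂_{y^n}(y) − P_Y(y)| ≤ θ_n·P_Y(y) for all y ∈ Y} with P̂_{y^n} the empirical distribution of y^n. -/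

import Mathlib

open scoped BigOperators Classical

noncomputable section

/-- Kullback–Leibler divergence between two pmfs on a finite set (natural log,
with the convention `0·log(0/q) = 0` encoded by the term vanishing). -/
def KL {Ω : Type} [Fintype Ω] (P Q : Ω → ℝ) : ℝ :=
  ∑ ω, P ω * Real.log (P ω / Q ω)

/-- `P` is a probability mass function on the finite set `Ω`. -/
def IsPMF {Ω : Type} [Fintype Ω] (P : Ω → ℝ) : Prop :=
  (∀ ω, 0 ≤ P ω) ∧ ∑ ω, P ω = 1

/-- Pushforward (law of `φ`) of the pmf `P` under the map `φ`. -/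
def pushf {Ω A : Type} [Fintype Ω] (P : Ω → ℝ) (φ : Ω → A) : A → ℝ :=
  fun a => ∑ ω, if φ ω = a then P ω else 0

/-- Mutual information `I(φA; φB)` under the pmf `P`. -/
def MIof {Ω A B : Type} [Fintype Ω] [Fintype A] [Fintype B]
    (P : Ω → ℝ) (φA : Ω → A) (φB : Ω → B) : ℝ :=
  KL (pushf P fun ω => (φA ω, φB ω)) (fun p => pushf P φA p.1 * pushf P φB p.2)

/-- Conditional mutual information `I(φA; φB | φC)` under the pmf `P`. -/
def CMIof {Ω A B C : Type} [Fintype Ω] [Fintype A] [Fintype B] [Fintype C]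
    (P : Ω → ℝ) (φA : Ω → A) (φB : Ω → B) (φC : Ω → C) : ℝ :=
  ∑ c, pushf P φC c *
    MIof (fun ω => if φC ω = c then P ω / pushf P φC c else 0) φA φB

/-- Markov chain `φA − φB − φC` under the pmf `P`:
`P_{ABC}(a,b,c) · P_B(b) = P_{AB}(a,b) · P_{BC}(b,c)`. -/
def MarkovChain {Ω A B C : Type} [Fintype Ω]
    (P : Ω → ℝ) (φA : Ω → A) (φB : Ω → B) (φC : Ω → C) : Prop :=
  ∀ a b c,
    pushf P (fun ω => (φA ω, φB ω, φC ω)) (a, b, c) * pushf P φB b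
      = pushf P (fun ω => (φA ω, φB ω)) (a, b) *
        pushf P (fun ω => (φB ω, φC ω)) (b, c)

/-- Marginal on `X` of a pmf on `X × Y × Z`. -/
def margX {X Y Z : Type} [Fintype X] [Fintype Y] [Fintype Z]
    (P : X × Y × Z → ℝ) : X → ℝ := pushf P (fun ω => ω.1)

/-- Marginal on `Y` of a pmf on `X × Y × Z`. -/
def margY {X Y Z : Type} [Fintype X] [Fintype Y] [Fintype Z]
    (P : X × Y × Z → ℝ) : Y → ℝ := pushf P (fun ω => ω.2.1)

/-- Marginal on `Z` of a pmf on `X × Y × Z`. -/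
def margZ {X Y Z : Type} [Fintype X] [Fintype Y] [Fintype Z]
    (P : X × Y × Z → ℝ) : Z → ℝ := pushf P (fun ω => ω.2.2)

/-- Marginal on `X × Y` of a pmf on `X × Y × Z`. -/
def margXY {X Y Z : Type} [Fintype X] [Fintype Y] [Fintype Z]
    (P : X × Y × Z → ℝ) : X × Y → ℝ := pushf P (fun ω => (ω.1, ω.2.1))

/-- Marginal on `Y × Z` of a pmf on `X × Y × Z`. -/
def margYZ {X Y Z : Type} [Fintype X] [Fintype Y] [Fintype Z]
    (P : X × Y × Z → ℝ) : Y × Z → ℝ := pushf P (fun ω => (ω.2.1, ω.2.2))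

/-- The conditional pmf `P_{Z|Y}(z|y)` induced by a pmf on `X × Y × Z`. -/
def condZY {X Y Z : Type} [Fintype X] [Fintype Y] [Fintype Z]
    (P : X × Y × Z → ℝ) (y : Y) (z : Z) : ℝ :=
  margYZ P (y, z) / margY P y

/-- The Markov chain `X − Y − Z` for the source distribution `P` on `X × Y × Z`. -/
def SourceMarkov {X Y Z : Type} [Fintype X] [Fintype Y] [Fintype Z]
    (P : X × Y × Z → ℝ) : Prop :=
  ∀ x y z, P (x, y, z) * margY P y = margXY P (x, y) * margYZ P (y, z)

/-- An `(n, N1, N2)`-code for hypothesis testing over a two-hop network.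
The Boolean value `true` of the decoders stands for the hypothesis `H0`,
and `false` stands for `H1`. -/
structure Code (X Y Z : Type) (n N1 N2 : ℕ) where
  f1 : (Fin n → X) → Fin N1
  f2 : Fin N1 → (Fin n → Y) → Fin N2
  g1 : Fin N1 → (Fin n → Y) → Bool
  g2 : Fin N2 → (Fin n → Z) → Bool

/-- Type-I error probability at the relay:
`P_XYZ^n {(x,y,z) : g1(f1(x), y) = H1}`. -/
def beta1 {X Y Z : Type} [Fintype X] [Fintype Y] [Fintype Z] {n N1 N2 : ℕ}
    (P : X × Y × Z → ℝ) (C : Code X Y Z n N1 N2) : ℝ :=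
  ∑ x : Fin n → X, ∑ y : Fin n → Y, ∑ z : Fin n → Z,
    if C.g1 (C.f1 x) y = false then ∏ i, P (x i, y i, z i) else 0

/-- Type-I error probability at the receiver:
`P_XYZ^n {(x,y,z) : g2(f2(f1(x), y), z) = H1}`. -/
def eta1 {X Y Z : Type} [Fintype X] [Fintype Y] [Fintype Z] {n N1 N2 : ℕ}
    (P : X × Y × Z → ℝ) (C : Code X Y Z n N1 N2) : ℝ :=
  ∑ x : Fin n → X, ∑ y : Fin n → Y, ∑ z : Fin n → Z,
    if C.g2 (C.f2 (C.f1 x) y) z = false then ∏ i, P (x i, y i, z i) else 0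

/-- Type-II error probability at the relay:
`(P_X^n ⊗ P_Y^n ⊗ P_Z^n) {(x,y,z) : g1(f1(x), y) = H0}`. -/
def beta2 {X Y Z : Type} [Fintype X] [Fintype Y] [Fintype Z] {n N1 N2 : ℕ}
    (P : X × Y × Z → ℝ) (C : Code X Y Z n N1 N2) : ℝ :=
  ∑ x : Fin n → X, ∑ y : Fin n → Y, ∑ z : Fin n → Z,
    if C.g1 (C.f1 x) y = true then
      (∏ i, margX P (x i)) * (∏ i, margY P (y i)) * (∏ i, margZ P (z i))
    else 0

/-- Type-II error probability at the receiver: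
`(P_X^n ⊗ P_Y^n ⊗ P_Z^n) {(x,y,z) : g2(f2(f1(x), y), z) = H0}`. -/
def eta2 {X Y Z : Type} [Fintype X] [Fintype Y] [Fintype Z] {n N1 N2 : ℕ}
    (P : X × Y × Z → ℝ) (C : Code X Y Z n N1 N2) : ℝ :=
  ∑ x : Fin n → X, ∑ y : Fin n → Y, ∑ z : Fin n → Z,
    if C.g2 (C.f2 (C.f1 x) y) z = true then
      (∏ i, margX P (x i)) * (∏ i, margY P (y i)) * (∏ i, margZ P (z i))
    else 0

end

noncomputable section

/-- The n-fold i.i.d. product `P_XY^n` evaluated at a pair of sequences. -/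
def prodXY {X Y Z : Type} [Fintype X] [Fintype Y] [Fintype Z] {n : ℕ}
    (P : X × Y × Z → ℝ) (p : (Fin n → X) × (Fin n → Y)) : ℝ :=
  ∏ i, margXY P (p.1 i, p.2 i)

/-- Empirical distribution (type) of a sequence `y ∈ Y^n`. -/
def empDist {Y : Type} [Fintype Y] {n : ℕ} (y : Fin n → Y) (a : Y) : ℝ :=
  ((Finset.univ.filter fun i => y i = a).card : ℝ) / n

/-- The product conditional probability `P_{Z|Y}^n(G(m2) | yⁿ)` of the acceptance
region `G(m2) = {zⁿ : g2(m2, zⁿ) = H0}`. -/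
def condAccept {X Y Z : Type} [Fintype X] [Fintype Y] [Fintype Z] {n N1 N2 : ℕ}
    (P : X × Y × Z → ℝ) (C : Code X Y Z n N1 N2)
    (m2 : Fin N2) (y : Fin n → Y) : ℝ :=
  ∑ z : Fin n → Z, if C.g2 m2 z = true then ∏ i, condZY P (y i) (z i) else 0

/-!
The complement of `C_n` is the union of three events. The relay rejects with
probability `β1 ≤ ε1`. By the Markov chain `X − Y − Z`, `η1` is the mean of
`1 - P_{Z|Y}^n(G(f2(f1 xⁿ, yⁿ)) | yⁿ)` under `P_XY^n`, so Markov's inequality bounds the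
probability that this conditional acceptance drops below `c = (1-ε1-ε2)/(1+3ε2-ε1)` by
`ε2/(1-c) = (1+3ε2-ε1)/4`. A multiplicative Chernoff bound for each letter, with a union
bound over `Y`, makes `yⁿ ∉ T_n` have probability at most `2|Y| exp(-n θ_n² / (3μ))`, which is
`(1-ε1-ε2)/4` by the choice of `θ_n`. The three bounds leave `(1-ε1-ε2)/2`.
-/

open Finset

section FiniteMass

variable {α : Type*} [Fintype α] {w : α → ℝ}

lemma sum_sub_sum_ite_not_le_sum_ite_and_and (hw : ∀ a, 0 ≤ w a) (A B C : α → Prop)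
    [DecidablePred A] [DecidablePred B] [DecidablePred C] :
    ∑ a, w a - (∑ a, if ¬ A a then w a else 0) - (∑ a, if ¬ B a then w a else 0)
      - (∑ a, if ¬ C a then w a else 0) ≤ ∑ a, if A a ∧ B a ∧ C a then w a else 0 := by
  simp only [← sum_sub_distrib]
  gcongr with a
  by_cases A a <;> by_cases B a <;> by_cases C a <;> simp [*, hw a]

lemma mul_sum_ite_le_sum_mul (hw : ∀ a, 0 ≤ w a) {f : α → ℝ} (hf : ∀ a, 0 ≤ f a) {t : ℝ}
    (S : α → Prop) [DecidablePred S] (hS : ∀ a, S a → t ≤ f a) :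
    t * ∑ a, (if S a then w a else 0) ≤ ∑ a, w a * f a := by
  rw [mul_sum]
  refine sum_le_sum fun a _ => ?_
  split_ifs with h
  · rw [mul_comm]
    exact mul_le_mul_of_nonneg_left (hS a h) (hw a)
  · simpa using mul_nonneg (hw a) (hf a)

lemma sum_ite_exists_le {β : Type*} [Fintype β] (hw : ∀ a, 0 ≤ w a) (S : β → α → Prop)
    [∀ b, DecidablePred (S b)] [DecidablePred fun a => ∃ b, S b a] :
    (∑ a, if ∃ b, S b a then w a else 0) ≤ ∑ b, ∑ a, if S b a then w a else 0 := by
  rw [sum_comm]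
  gcongr with a
  have hnonneg : ∀ b, 0 ≤ if S b a then w a else 0 := fun b => by split_ifs <;> simp [hw a]
  split_ifs with h
  · obtain ⟨b, hb⟩ := h
    simpa [hb] using single_le_sum (fun b _ => hnonneg b) (mem_univ b)
  · exact sum_nonneg fun b _ => hnonneg b

end FiniteMass

section Pushforward

variable {Ω A B : Type} [Fintype Ω]

lemma pushf_nonneg {P : Ω → ℝ} (hP : ∀ ω, 0 ≤ P ω) (φ : Ω → A) (a : A) : 0 ≤ pushf P φ a :=
  sum_nonneg fun ω _ => by split_ifs <;> simp [hP ω]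

lemma le_pushf_apply {P : Ω → ℝ} (hP : ∀ ω, 0 ≤ P ω) (φ : Ω → A) (ω : Ω) :
    P ω ≤ pushf P φ (φ ω) := by
  unfold pushf
  simpa using single_le_sum (f := fun ω' => if φ ω' = φ ω then P ω' else 0)
    (fun ω' _ => by split_ifs <;> simp [hP ω']) (mem_univ ω)

lemma sum_pushf [Fintype A] (P : Ω → ℝ) (φ : Ω → A) : ∑ a, pushf P φ a = ∑ ω, P ω := by
  unfold pushf
  rw [sum_comm]
  simp

lemma pushf_pushf [Fintype A] (P : Ω → ℝ) (φ : Ω → A) (ψ : A → B) :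
    pushf (pushf P φ) ψ = pushf P (ψ ∘ φ) := by
  ext b
  unfold pushf
  rw [← sum_filter, sum_comm]
  simp

lemma pushf_fst_apply [Fintype A] [Fintype B] (Q : A × B → ℝ) (a : A) :
    pushf Q Prod.fst a = ∑ b, Q (a, b) := by
  rw [pushf, Fintype.sum_prod_type, sum_comm]
  simp only [sum_ite_eq', mem_univ, if_true]

lemma pushf_snd_apply [Fintype A] [Fintype B] (Q : A × B → ℝ) (b : B) :
    pushf Q Prod.snd b = ∑ a, Q (a, b) := by
  rw [pushf, Fintype.sum_prod_type]
  simp only [sum_ite_eq', mem_univ, if_true]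

end Pushforward

section Marginals

variable {X Y Z : Type} [Fintype X] [Fintype Y] [Fintype Z] {P : X × Y × Z → ℝ}

lemma margY_nonneg (hP : IsPMF P) (y : Y) : 0 ≤ margY P y := pushf_nonneg hP.1 _ y

lemma margXY_nonneg (hP : IsPMF P) (q : X × Y) : 0 ≤ margXY P q := pushf_nonneg hP.1 _ q

lemma sum_margY (hP : IsPMF P) : ∑ y, margY P y = 1 := by
  rw [margY, sum_pushf, hP.2]

variable (P) in
lemma margXY_apply (x : X) (y : Y) : margXY P (x, y) = ∑ z, P (x, y, z) := by
  rw [margXY, pushf, ← Equiv.sum_comp (Equiv.prodAssoc X Y Z), Fintype.sum_prod_type, sum_comm]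
  simp only [Equiv.prodAssoc_apply, Prod.mk.eta, sum_ite_eq', mem_univ, if_true]

variable (P) in
lemma sum_margXY (y : Y) : ∑ x, margXY P (x, y) = margY P y := by
  rw [← pushf_snd_apply, margXY, pushf_pushf]
  rfl

variable (P) in
lemma sum_margYZ (y : Y) : ∑ z, margYZ P (y, z) = margY P y := by
  rw [← pushf_fst_apply, margYZ, pushf_pushf]
  rfl

lemma condZY_nonneg (hP : IsPMF P) (y : Y) (z : Z) : 0 ≤ condZY P y z :=
  div_nonneg (pushf_nonneg hP.1 _ _) (margY_nonneg hP y)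

variable (P) in
lemma sum_condZY_le_one (y : Y) : ∑ z, condZY P y z ≤ 1 := by
  simp only [condZY]
  rw [← sum_div, sum_margYZ]
  exact div_self_le_one _

lemma SourceMarkov.eq_margXY_mul_condZY (hP : IsPMF P) (hM : SourceMarkov P) (x : X) (y : Y)
    (z : Z) : P (x, y, z) = margXY P (x, y) * condZY P y z := by
  rcases eq_or_ne (margY P y) 0 with h | h
  · have hzero : P (x, y, z) = 0 :=
      le_antisymm (h ▸ le_pushf_apply hP.1 (fun ω => ω.2.1) (x, y, z)) (hP.1 _)
    simp [condZY, h, hzero]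
  · rw [condZY, mul_div_assoc', eq_div_iff h, hM]

lemma SourceMarkov.margXY_mul_sum_condZY (hP : IsPMF P) (hM : SourceMarkov P) (x : X)
    (y : Y) : margXY P (x, y) * ∑ z, condZY P y z = margXY P (x, y) := by
  conv_rhs => rw [margXY_apply]
  rw [mul_sum]
  exact sum_congr rfl fun z _ => (hM.eq_margXY_mul_condZY hP x y z).symm

end Marginals

section Sequences

variable {X Y Z : Type} [Fintype X] [Fintype Y] [Fintype Z] {P : X × Y × Z → ℝ} {n : ℕ}

lemma prodXY_nonneg (hP : IsPMF P) (p : (Fin n → X) × (Fin n → Y)) : 0 ≤ prodXY P p :=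
  prod_nonneg fun _ _ => margXY_nonneg hP _

variable (P) in
lemma sum_prod_eq_prodXY (x : Fin n → X) (y : Fin n → Y) :
    ∑ z : Fin n → Z, ∏ i, P (x i, y i, z i) = prodXY P (x, y) := by
  simp only [prodXY, margXY_apply, Fintype.prod_sum]

variable (P) in
lemma sum_prodXY_ite_snd (S : (Fin n → Y) → Prop) [DecidablePred S] :
    ∑ p : (Fin n → X) × (Fin n → Y), (if S p.2 then prodXY P p else 0)
      = ∑ y : Fin n → Y, if S y then ∏ i, margY P (y i) else 0 := by
  rw [Fintype.sum_prod_type, sum_comm]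
  refine sum_congr rfl fun y _ => ?_
  split_ifs
  · simp only [prodXY, ← sum_margXY P, Fintype.prod_sum]
  · simp

lemma sum_prod_margY (hP : IsPMF P) : ∑ y : Fin n → Y, ∏ i, margY P (y i) = 1 := by
  rw [← Fintype.sum_pow, sum_margY hP, one_pow]

lemma sum_prodXY (hP : IsPMF P) : ∑ p : (Fin n → X) × (Fin n → Y), prodXY P p = 1 := by
  simpa [sum_prod_margY hP] using sum_prodXY_ite_snd (X := X) (n := n) P fun _ => True

lemma sum_prod_condZY_le_one (hP : IsPMF P) (y : Fin n → Y) :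
    ∑ z : Fin n → Z, ∏ i, condZY P (y i) (z i) ≤ 1 := by
  rw [← Fintype.prod_sum fun i z => condZY P (y i) z]
  exact prod_le_one (fun i _ => sum_nonneg fun z _ => condZY_nonneg hP _ _)
    fun i _ => sum_condZY_le_one P (y i)

lemma SourceMarkov.prodXY_mul_sum_prod_condZY (hP : IsPMF P) (hM : SourceMarkov P)
    (x : Fin n → X) (y : Fin n → Y) :
    prodXY P (x, y) * ∑ z : Fin n → Z, ∏ i, condZY P (y i) (z i) = prodXY P (x, y) := by
  rw [← Fintype.prod_sum fun i z => condZY P (y i) z, prodXY, ← prod_mul_distrib]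
  exact prod_congr rfl fun i _ => hM.margXY_mul_sum_condZY hP (x i) (y i)

end Sequences

section Code

variable {X Y Z : Type} [Fintype X] [Fintype Y] [Fintype Z] {P : X × Y × Z → ℝ} {n N1 N2 : ℕ}
  (C : Code X Y Z n N1 N2)

lemma beta1_eq_sum_prodXY :
    beta1 P C = ∑ p, if ¬ C.g1 (C.f1 p.1) p.2 = true then prodXY P p else 0 := by
  rw [beta1, Fintype.sum_prod_type]
  refine sum_congr rfl fun x _ => sum_congr rfl fun y _ => ?_
  simp only [Bool.not_eq_true]
  split_ifs <;> simp [sum_prod_eq_prodXY]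

lemma condAccept_le_one (hP : IsPMF P) (m2 : Fin N2) (y : Fin n → Y) :
    condAccept P C m2 y ≤ 1 := by
  refine le_trans (sum_le_sum fun z _ => ?_) (sum_prod_condZY_le_one hP y)
  split_ifs
  · exact le_rfl
  · exact prod_nonneg fun i _ => condZY_nonneg hP _ _

lemma SourceMarkov.eta1_eq (hP : IsPMF P) (hM : SourceMarkov P) :
    eta1 P C = ∑ p, prodXY P p * (1 - condAccept P C (C.f2 (C.f1 p.1) p.2) p.2) := by
  rw [eta1, Fintype.sum_prod_type]
  refine sum_congr rfl fun x _ => sum_congr rfl fun y _ => ?_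
  calc (∑ z : Fin n → Z, if C.g2 (C.f2 (C.f1 x) y) z = false then ∏ i, P (x i, y i, z i) else 0)
      = prodXY P (x, y) * ∑ z : Fin n → Z,
          if C.g2 (C.f2 (C.f1 x) y) z = false then ∏ i, condZY P (y i) (z i) else 0 := by
        rw [mul_sum]
        refine sum_congr rfl fun z _ => ?_
        split_ifs
        · simp only [prodXY, ← prod_mul_distrib, ← hM.eq_margXY_mul_condZY hP]
        · rw [mul_zero]
    _ = prodXY P (x, y) * ∑ z : Fin n → Z, ∏ i, condZY P (y i) (z i)
          - prodXY P (x, y) * condAccept P C (C.f2 (C.f1 x) y) y := by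
        rw [condAccept, ← mul_sub, ← sum_sub_distrib]
        congr 1
        refine sum_congr rfl fun z _ => ?_
        cases C.g2 (C.f2 (C.f1 x) y) z <;> simp
    _ = prodXY P (x, y) * (1 - condAccept P C (C.f2 (C.f1 x) y) y) := by
        rw [hM.prodXY_mul_sum_prod_condZY hP, mul_sub, mul_one]

lemma SourceMarkov.one_sub_mul_sum_ite_condAccept_lt_le_eta1 (hP : IsPMF P)
    (hM : SourceMarkov P) (c : ℝ) :
    (1 - c) * ∑ p, (if ¬ c ≤ condAccept P C (C.f2 (C.f1 p.1) p.2) p.2 then prodXY P p else 0)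
      ≤ eta1 P C := by
  rw [hM.eta1_eq C hP]
  exact mul_sum_ite_le_sum_mul (prodXY_nonneg hP)
    (fun p => sub_nonneg.2 (condAccept_le_one C hP _ _)) _ fun p hp => by linarith [not_le.1 hp]

lemma SourceMarkov.sum_ite_condAccept_lt_le (hP : IsPMF P) (hM : SourceMarkov P)
    {ε1 ε2 : ℝ} (hε2 : 0 < ε2) (hsum : ε1 + ε2 < 1) (hη : eta1 P C ≤ ε2) :
    ∑ p, (if ¬ (1 - ε1 - ε2) / (1 + 3 * ε2 - ε1) ≤ condAccept P C (C.f2 (C.f1 p.1) p.2) p.2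
      then prodXY P p else 0) ≤ (1 + 3 * ε2 - ε1) / 4 := by
  have hden : 0 < 1 + 3 * ε2 - ε1 := by linarith
  have hgap : 1 - (1 - ε1 - ε2) / (1 + 3 * ε2 - ε1) = 4 * ε2 / (1 + 3 * ε2 - ε1) := by
    rw [eq_div_iff hden.ne', sub_mul, div_mul_cancel₀ _ hden.ne']
    ring
  have hB := (hM.one_sub_mul_sum_ite_condAccept_lt_le_eta1 C hP
    ((1 - ε1 - ε2) / (1 + 3 * ε2 - ε1))).trans hη
  rw [hgap, div_mul_eq_mul_div, div_le_iff₀ hden] at hB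
  nlinarith

end Code

section Chernoff

variable {Y : Type} [Fintype Y] {n : ℕ}

lemma sum_prod_mul_pow_card_filter_eq {R : Type*} [CommRing R] {Q : Y → R} (hQ : ∑ b, Q b = 1)
    (a : Y) (r : R) :
    ∑ y : Fin n → Y, (∏ i, Q (y i)) * r ^ #{i | y i = a} = (1 + Q a * (r - 1)) ^ n := by
  have hfactor : ∀ y : Fin n → Y,
      (∏ i, Q (y i)) * r ^ #{i | y i = a} = ∏ i, Q (y i) * if y i = a then r else 1 := by
    intro y
    rw [prod_mul_distrib, prod_ite, prod_const, prod_const_one, mul_one]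
  have hsum : ∑ b, Q b * (if b = a then r else 1) = 1 + Q a * (r - 1) := by
    calc ∑ b, Q b * (if b = a then r else 1)
        = ∑ b, (Q b + if b = a then Q b * (r - 1) else 0) :=
          sum_congr rfl fun b _ => by split_ifs <;> ring
      _ = 1 + Q a * (r - 1) := by simp [sum_add_distrib, hQ]
  simp only [hfactor]
  rw [← Fintype.prod_sum fun _ b => Q b * if b = a then r else 1, hsum, prod_const, card_univ,
    Fintype.card_fin]

lemma exp_le_one_add_add_sq {s : ℝ} (hs : |s| ≤ 1) : Real.exp s ≤ 1 + s + 3 / 4 * s ^ 2 := by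
  have h := Real.exp_bound hs (n := 2) (by norm_num)
  norm_num [sum_range_succ, Nat.factorial] at h
  nlinarith [abs_le.1 h, sq_abs s]

variable {Q : Y → ℝ}

/-- For `δ > 0` the event is the upper tail `k ≥ nQ(a)(1+δ)` of the count `k` of `a`, for `δ < 0`
the lower tail `k ≤ nQ(a)(1+δ)`; both follow from the exponential moment at `s = 2δ/3`. -/
lemma sum_ite_deviation_le (hQ0 : ∀ b, 0 ≤ Q b) (hQ1 : ∑ b, Q b = 1) (a : Y) {δ : ℝ}
    (hδ : |δ| ≤ 1) :
    ∑ y : Fin n → Y, (if δ ^ 2 * (n * Q a) ≤ δ * (#{i | y i = a} - n * Q a)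
      then ∏ i, Q (y i) else 0) ≤ Real.exp (-(n * Q a * δ ^ 2) / 3) := by
  set s := 2 * δ / 3 with hs
  set t := s * (n * Q a * (1 + δ)) with ht
  have hexp : Real.exp s ≤ 1 + s + 3 / 4 * s ^ 2 :=
    exp_le_one_add_add_sq (by rw [hs, abs_div, abs_mul]; norm_num; linarith)
  have hQa : Q a ≤ 1 := hQ1 ▸ single_le_sum (fun b _ => hQ0 b) (mem_univ a)
  have hnQ : 0 ≤ n * Q a := mul_nonneg n.cast_nonneg (hQ0 a)
  have hbase : 0 ≤ 1 + Q a * (Real.exp s - 1) := by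
    nlinarith [mul_nonneg (hQ0 a) (Real.exp_pos s).le]
  calc ∑ y : Fin n → Y, (if δ ^ 2 * (n * Q a) ≤ δ * (#{i | y i = a} - n * Q a)
        then ∏ i, Q (y i) else 0)
      ≤ ∑ y : Fin n → Y, Real.exp (-t) * ((∏ i, Q (y i)) * Real.exp s ^ #{i | y i = a}) := by
        refine sum_le_sum fun y _ => ?_
        have hprod : 0 ≤ ∏ i, Q (y i) := prod_nonneg fun i _ => hQ0 _
        split_ifs with h
        · have hexp_nonneg : 1 ≤ Real.exp (-t) * Real.exp s ^ #{i | y i = a} := by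
            rw [← Real.exp_nat_mul, ← Real.exp_add]
            exact Real.one_le_exp (by rw [ht, hs]; nlinarith)
          nlinarith
        · positivity
    _ = Real.exp (-t) * (1 + Q a * (Real.exp s - 1)) ^ n := by
        rw [← mul_sum, sum_prod_mul_pow_card_filter_eq hQ1]
    _ ≤ Real.exp (-t) * Real.exp (Q a * (Real.exp s - 1)) ^ n := by
        gcongr
        linarith [Real.add_one_le_exp (Q a * (Real.exp s - 1))]
    _ = Real.exp (-t + n * (Q a * (Real.exp s - 1))) := by
        rw [← Real.exp_nat_mul, ← Real.exp_add]
    _ ≤ Real.exp (-(n * Q a * δ ^ 2) / 3) := by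
        have hkey : -t + n * Q a * (s + 3 / 4 * s ^ 2) = -(n * Q a * δ ^ 2) / 3 := by
          rw [ht, hs]
          ring
        gcongr
        nlinarith [mul_le_mul_of_nonneg_left hexp hnQ]

lemma sum_ite_abs_empDist_sub_le (hQ0 : ∀ b, 0 ≤ Q b) (hQ1 : ∑ b, Q b = 1) (a : Y)
    (hn : 0 < n) {θ : ℝ} (hθ0 : 0 ≤ θ) (hθ1 : θ ≤ 1) :
    ∑ y : Fin n → Y, (if ¬ |empDist y a - Q a| ≤ θ * Q a then ∏ i, Q (y i) else 0)
      ≤ 2 * Real.exp (-(n * Q a * θ ^ 2) / 3) := by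
  have hnR : (0 : ℝ) < n := Nat.cast_pos.2 hn
  calc ∑ y : Fin n → Y, (if ¬ |empDist y a - Q a| ≤ θ * Q a then ∏ i, Q (y i) else 0)
      ≤ ∑ y : Fin n → Y,
          ((if θ ^ 2 * (n * Q a) ≤ θ * (#{i | y i = a} - n * Q a) then ∏ i, Q (y i) else 0)
          + (if (-θ) ^ 2 * (n * Q a) ≤ -θ * (#{i | y i = a} - n * Q a)
              then ∏ i, Q (y i) else 0)) := by
        refine sum_le_sum fun y _ => ?_
        set k : ℝ := ((#{i | y i = a} : ℕ) : ℝ)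
        have hnonneg : ∀ δ : ℝ,
            0 ≤ if δ ^ 2 * (n * Q a) ≤ δ * (k - n * Q a) then ∏ i, Q (y i) else 0 :=
          fun δ => by split_ifs <;> simp [prod_nonneg fun i _ => hQ0 (y i)]
        by_cases h : |empDist y a - Q a| ≤ θ * Q a
        · rw [if_neg (not_not.2 h)]
          exact add_nonneg (hnonneg θ) (hnonneg (-θ))
        · rw [if_pos h]
          have hk : θ * (n * Q a) < |k - n * Q a| := by
            have hscale : k - n * Q a = n * (empDist y a - Q a) := by
              rw [empDist, mul_sub, mul_div_cancel₀ _ hnR.ne']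
            rw [hscale, abs_mul, abs_of_pos hnR]
            nlinarith [not_le.1 h]
          rcases abs_cases (k - n * Q a) with ⟨habs, -⟩ | ⟨habs, -⟩
          · rw [if_pos (by rw [habs] at hk; nlinarith)]
            linarith [hnonneg (-θ)]
          · rw [if_pos (show (-θ) ^ 2 * (n * Q a) ≤ -θ * (k - n * Q a) by
              rw [habs] at hk; nlinarith)]
            linarith [hnonneg θ]
    _ ≤ 2 * Real.exp (-(n * Q a * θ ^ 2) / 3) := by
        rw [sum_add_distrib, two_mul]
        gcongr
        · exact sum_ite_deviation_le hQ0 hQ1 a (abs_le.2 ⟨by linarith, hθ1⟩)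
        · simpa using sum_ite_deviation_le hQ0 hQ1 a (δ := -θ) (abs_le.2 ⟨by linarith, by linarith⟩)

lemma sum_ite_not_typical_le (hQ0 : ∀ b, 0 ≤ Q b) (hQ1 : ∑ b, Q b = 1) (hn : 0 < n) {θ : ℝ}
    (hθ0 : 0 ≤ θ) (hθ1 : θ ≤ 1) {L : ℝ} (hL : ∀ a, 0 < Q a → L ≤ n * Q a * θ ^ 2 / 3) :
    ∑ y : Fin n → Y, (if ¬ ∀ a, |empDist y a - Q a| ≤ θ * Q a then ∏ i, Q (y i) else 0)
      ≤ Fintype.card Y * (2 * Real.exp (-L)) := by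
  simp only [not_forall]
  refine (sum_ite_exists_le (fun y => prod_nonneg fun i _ => hQ0 (y i)) _).trans ?_
  rw [← nsmul_eq_mul, ← card_univ, ← sum_const]
  refine sum_le_sum fun a _ => ?_
  rcases (hQ0 a).eq_or_lt with hQa | hQa
  · refine le_of_eq_of_le (sum_eq_zero fun y _ => ?_) (by positivity)
    by_cases h : |empDist y a - Q a| ≤ θ * Q a
    · exact if_neg (not_not.2 h)
    · have hcard : #{i | y i = a} ≠ 0 := by
        intro h0
        apply h
        simp [empDist, h0, ← hQa]
      obtain ⟨i, hi⟩ := card_ne_zero.1 hcard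
      rw [if_pos h]
      exact prod_eq_zero (mem_univ i) (by rw [(mem_filter.1 hi).2, hQa])
  · refine (sum_ite_abs_empDist_sub_le hQ0 hQ1 a hn hθ0 hθ1).trans ?_
    gcongr
    linarith [hL a hQa]

lemma sum_ite_not_typical_sqrt_le (hQ0 : ∀ b, 0 ≤ Q b) (hQ1 : ∑ b, Q b = 1) {μ L : ℝ}
    (hμ0 : 0 < μ) (hμ : ∀ a, 0 < Q a → μ⁻¹ ≤ Q a) (hL : 0 ≤ L) (hn : 0 < n)
    (hnL : 3 * μ * L ≤ n) :
    ∑ y : Fin n → Y, (if ¬ ∀ a, |empDist y a - Q a| ≤ √(3 * μ / n * L) * Q a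
      then ∏ i, Q (y i) else 0) ≤ Fintype.card Y * (2 * Real.exp (-L)) := by
  have hnR : (0 : ℝ) < n := Nat.cast_pos.2 hn
  have hθsq : √(3 * μ / n * L) ^ 2 = 3 * μ / n * L := Real.sq_sqrt (by positivity)
  refine sum_ite_not_typical_le hQ0 hQ1 hn (Real.sqrt_nonneg _) ?_ fun a ha => ?_
  · rw [Real.sqrt_le_one, div_mul_eq_mul_div, div_le_one hnR]
    exact hnL
  · have hμQ : 1 ≤ μ * Q a := by
      simpa [hμ0.ne'] using mul_le_mul_of_nonneg_left (hμ a ha) hμ0.le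
    calc L ≤ μ * Q a * L := le_mul_of_one_le_left hL hμQ
      _ = n * Q a * √(3 * μ / n * L) ^ 2 / 3 := by
        rw [hθsq]
        field_simp

end Chernoff

theorem truncation_set_prob_general
    (X Y Z : Type) [Fintype X] [Fintype Y] [Fintype Z]
    (P : X × Y × Z → ℝ) (hP : IsPMF P) (hMarkov : SourceMarkov P)
    (ε1 ε2 : ℝ) (hε1 : ε1 ∈ Set.Ioo (0 : ℝ) 1) (hε2 : ε2 ∈ Set.Ioo (0 : ℝ) 1)
    (hsum : ε1 + ε2 < 1)
    (μ : ℝ) (hμ : IsLeast {r : ℝ | ∃ y, 0 < margY P y ∧ margY P y = r} μ⁻¹) :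
    ∃ n0 : ℕ, ∀ n : ℕ, n0 ≤ n → ∀ N1 N2 : ℕ, ∀ C : Code X Y Z n N1 N2,
      beta1 P C ≤ ε1 → eta1 P C ≤ ε2 →
      (1 - ε1 - ε2) / 2 ≤
        ∑ p : (Fin n → X) × (Fin n → Y),
          if ((1 - ε1 - ε2) / (1 + 3 * ε2 - ε1)
                ≤ condAccept P C (C.f2 (C.f1 p.1) p.2) p.2) ∧
              C.g1 (C.f1 p.1) p.2 = true ∧
              (∀ a : Y, |empDist p.2 a - margY P a| ≤
                Real.sqrt ((3 * μ / n) *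
                  Real.log (8 * (Fintype.card Y : ℝ) / (1 - ε1 - ε2)))
                * margY P a) then
            prodXY P p
          else 0 := by
  obtain ⟨⟨y0, hy0, hμy0⟩, hμmin⟩ := hμ
  have hμ0 : 0 < μ := inv_pos.1 (hμy0 ▸ hy0)
  have hδ : 0 < 1 - ε1 - ε2 := by linarith
  have hcard : (1 : ℝ) ≤ Fintype.card Y := Nat.one_le_cast.2 (Fintype.card_pos_iff.2 ⟨y0⟩)
  set L := Real.log (8 * (Fintype.card Y : ℝ) / (1 - ε1 - ε2)) with hL
  have hL0 : 0 ≤ L := Real.log_nonneg (by rw [le_div_iff₀ hδ]; linarith [hε1.1, hε2.1])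
  have hexpL : Fintype.card Y * (2 * Real.exp (-L)) = (1 - ε1 - ε2) / 4 := by
    rw [hL, Real.exp_neg, Real.exp_log (by positivity)]
    field_simp
    ring
  refine ⟨⌈3 * μ * L⌉₊ + 1, fun n hn N1 N2 C hβ hη => ?_⟩
  have hn0 : 0 < n := by omega
  have hnL : 3 * μ * L ≤ n := (Nat.le_ceil _).trans (by exact_mod_cast (Nat.le_succ _).trans hn)
  have hB := hMarkov.sum_ite_condAccept_lt_le C hP hε2.1 hsum hη
  have hD := beta1_eq_sum_prodXY C ▸ hβ
  have hT := (sum_prodXY_ite_snd (X := X) P _).trans_le <| sum_ite_not_typical_sqrt_le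
    (margY_nonneg hP) (sum_margY hP) hμ0 (fun a ha => hμmin ⟨a, ha, rfl⟩) hL0 hn0 hnL
  refine le_trans ?_ (sum_sub_sum_ite_not_le_sum_ite_and_and (prodXY_nonneg hP) _ _ _)
  rw [sum_prodXY hP]
  linarith

/-- **The truncation event has large probability.**
For all sufficiently large `n` and any `(n,N1,N2)`-code with `β1 ≤ ε1` and
`η1 ≤ ε2`, the set `C_n = B_n ∩ D_{Y,n} ∩ (Xⁿ × T_n)` satisfies
`P_XY^n(C_n) ≥ (1−ε1−ε2)/2`. -/
theorem truncation_set_prob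
    (X Y Z : Type) [Fintype X] [Fintype Y] [Fintype Z]
    [Nonempty X] [Nonempty Y] [Nonempty Z]
    (P : X × Y × Z → ℝ) (hP : IsPMF P) (hMarkov : SourceMarkov P)
    (ε1 ε2 : ℝ) (hε1 : ε1 ∈ Set.Ioo (0 : ℝ) 1) (hε2 : ε2 ∈ Set.Ioo (0 : ℝ) 1)
    (hsum : ε1 + ε2 < 1)
    (μ : ℝ) (hμ : IsLeast {r : ℝ | ∃ y, 0 < margY P y ∧ margY P y = r} μ⁻¹) :
    ∃ n0 : ℕ, ∀ n : ℕ, n0 ≤ n → ∀ N1 N2 : ℕ, ∀ C : Code X Y Z n N1 N2,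
      beta1 P C ≤ ε1 → eta1 P C ≤ ε2 →
      (1 - ε1 - ε2) / 2 ≤
        ∑ p : (Fin n → X) × (Fin n → Y),
          if ((1 - ε1 - ε2) / (1 + 3 * ε2 - ε1)
                ≤ condAccept P C (C.f2 (C.f1 p.1) p.2) p.2) ∧
              C.g1 (C.f1 p.1) p.2 = true ∧
              (∀ a : Y, |empDist p.2 a - margY P a| ≤
                Real.sqrt ((3 * μ / n) *
                  Real.log (8 * (Fintype.card Y : ℝ) / (1 - ε1 - ε2)))
                * margY P a) then
            prodXY P p
          else 0 :=
  truncation_set_prob_general X Y Z P hP hMarkov ε1 ε2 hε1 hε2 hsum μ hμ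

end
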